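/- Existence with relaxed data, stochastic case (Corollary 3.3). Under the stated assumptions, there exists v ∈ L^∞(X×(0,∞)) with v ≥ 0 such that v(x,t) = g̃(x,t) + ∫₀ᵗ ∫_X K(x,y;t−s) h(y,s) G̃(v(y,s)) dμ(y) ds for a.e. x ∈ X and a.e. t > 0; v is the uniform limit of the nonincreasing sequence {v_m} of non-negative measurable functions defined by v₀(x,t) := ξ̃ − β̃ + g̃(x,t) and v_{m+1}(x,t) := g̃(x,t) + ∫₀ᵗ ∫_X K(x,y;t−s) h(y,s) G̃(v_m(y,s)) dμ(y) ds, where β̃ := ‖g̃‖_{L^∞}; and there exist C > 0 and k ∈ (0,1) with 0 ≤ v_{m+1}(x,t) − v(x,t) ≤ C k^m for a.e. x ∈ X, a.e. t > 0 and all m ∈ ℕ. -/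

import Mathlib

/-!
Write `T W (x, t) = ∫₀ᵗ ∫ K(x, y, t - s) h(y, s) W(y, s) dμ(y) ds`. Since `K` is stochastic and
`h ≤ p₂` with `∫ p₂ = 1`, `T` maps functions with values in `[0, c]` to functions bounded by `c`.
As `V 0 = gt + Gt ξt` and `gt + Gt ξt ≤ ξt` a.e., induction with the monotonicity of `Gt` shows
that the iterates `V (m + 1) = gt + T (Gt ∘ V m)` stay in `[0, ξt]` and decrease; their infimum
`v` solves the equation by dominated convergence. Concavity of `Gt` and `Gt (-β₀) = 0` give
`(1 - c) Gt b ≤ Gt a` whenever `0 ≤ a ≤ b` and `b - a ≤ c (b + β₀)`, which propagates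
`V m - v ≤ k ^ m (V m + β₀)` with `k = ξt / (ξt + β₀)`; as `V m ≤ ξt`, this gives
`V (m + 1) - v ≤ ξt k ^ m`.
-/

open MeasureTheory Set Filter Topology

local notation "ν₊" => volume.restrict (Ioi (0:ℝ))

theorem ae_ae_swap_of_ae_prod {α β : Type*} [MeasurableSpace α] [MeasurableSpace β]
    {μ : Measure α} {ν : Measure β} [SFinite μ] [SFinite ν] {p : α × β → Prop}
    (h : ∀ᵐ q ∂μ.prod ν, p q) : ∀ᵐ y ∂ν, ∀ᵐ x ∂μ, p (x, y) :=
  Measure.ae_ae_of_ae_prod (Measure.measurePreserving_swap.quasiMeasurePreserving.ae h)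

theorem ae_prod_of_ae_ae₀ {α β : Type*} [MeasurableSpace α] [MeasurableSpace β]
    {μ : Measure α} {ν : Measure β} [SFinite ν] {p : α × β → Prop}
    (hp : NullMeasurableSet {z | p z} (μ.prod ν)) (h : ∀ᵐ x ∂μ, ∀ᵐ y ∂ν, p (x, y)) :
    ∀ᵐ z ∂μ.prod ν, p z := by
  have hT : ∀ᵐ z ∂μ.prod ν, (z ∈ toMeasurable (μ.prod ν) {z | p z} ↔ p z) :=
    hp.toMeasurable_ae_eq.mem_iff
  have hmem : ∀ᵐ z ∂μ.prod ν, z ∈ toMeasurable (μ.prod ν) {z | p z} := by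
    refine (Measure.ae_prod_mem_iff_ae_ae_mem (measurableSet_toMeasurable _ _)).2 ?_
    filter_upwards [h, Measure.ae_ae_of_ae_prod hT] with x hx hTx
    filter_upwards [hx, hTx] with y hy hTy using hTy.2 hy
  filter_upwards [hT, hmem] with z hz hzm using hz.1 hzm

theorem ae_prod_of_ae_forall {α β : Type*} [MeasurableSpace α] [MeasurableSpace β]
    {μ : Measure α} {ν : Measure β} {p : α × β → Prop} (h : ∀ᵐ x ∂μ, ∀ y, p (x, y)) :
    ∀ᵐ q ∂μ.prod ν, p q :=
  (Measure.quasiMeasurePreserving_fst.ae h).mono fun q hq => hq q.2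

theorem ae_restrict_Ioc_sub {P : ℝ → Prop} (h : ∀ᵐ r ∂ν₊, P r) (t : ℝ) :
    ∀ᵐ s ∂volume.restrict (Ioc 0 t), P (t - s) := by
  rw [← Measure.restrict_congr_set Ioo_ae_eq_Ioc, ae_restrict_iff' measurableSet_Ioo]
  rw [ae_restrict_iff' measurableSet_Ioi] at h
  filter_upwards [(Measure.measurePreserving_sub_left volume t).quasiMeasurePreserving.ae h]
    with s hs hst using hs (sub_pos.2 hst.2)

theorem ContinuousOn.measurable_comp {α β γ : Type*} [MeasurableSpace α]
    [TopologicalSpace β] [MeasurableSpace β] [OpensMeasurableSpace β]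
    [TopologicalSpace γ] [MeasurableSpace γ] [BorelSpace γ]
    {f : β → γ} {s : Set β} (hf : ContinuousOn f s) {g : α → β} (hg : Measurable g)
    (hgs : ∀ x, g x ∈ s) : Measurable fun x => f (g x) :=
  hf.domRestrict.measurable.comp (hg.subtype_mk (h := hgs))

theorem ConcaveOn.sub_mul_le_sub_mul_of_apply_eq_zero {f : ℝ → ℝ} {x₀ a b : ℝ}
    (hf : ConcaveOn ℝ (Ici x₀) f) (h₀ : f x₀ = 0) (ha : x₀ ≤ a) (hab : a ≤ b) :
    (a - x₀) * f b ≤ (b - x₀) * f a := by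
  rcases (ha.trans hab).eq_or_lt with hb | hb
  · obtain rfl : a = x₀ := by linarith
    rw [← hb]
  have hbx : 0 < b - x₀ := sub_pos.2 hb
  have hconc := hf.2 (mem_Ici.2 hb.le) self_mem_Ici (div_nonneg (sub_nonneg.2 ha) hbx.le)
    (div_nonneg (sub_nonneg.2 hab) hbx.le)
    (by rw [← add_div, div_eq_one_iff_eq hbx.ne']; ring)
  have hcomb : ((a - x₀) / (b - x₀)) • b + ((b - a) / (b - x₀)) • x₀ = a := by
    simp only [smul_eq_mul]; field_simp; ring
  rw [hcomb, h₀, smul_zero, add_zero, smul_eq_mul, div_mul_eq_mul_div, div_le_iff₀ hbx] at hconc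
  linarith

theorem ConcaveOn.one_sub_mul_le_of_sub_le {f : ℝ → ℝ} {x₀ a b c : ℝ}
    (hf : ConcaveOn ℝ (Ici x₀) f) (h₀ : f x₀ = 0) (ha : x₀ ≤ a) (hab : a ≤ b) (hb : x₀ < b)
    (hfb : 0 ≤ f b) (hc : b - a ≤ c * (b - x₀)) : (1 - c) * f b ≤ f a := by
  have hsec := hf.sub_mul_le_sub_mul_of_apply_eq_zero h₀ ha hab
  have hbx : 0 < b - x₀ := sub_pos.2 hb
  refine le_of_mul_le_mul_left ?_ hbx
  nlinarith [mul_le_mul_of_nonneg_right hc hfb]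

theorem integral_mul_le_of_integral_eq_one {Y : Type*} [MeasurableSpace Y] {ν : Measure Y}
    {k f : Y → ℝ} {c : ℝ} (hk0 : ∀ y, 0 ≤ k y) (hk : ∫ y, k y ∂ν = 1)
    (hf0 : ∀ᵐ y ∂ν, 0 ≤ f y) (hfc : ∀ᵐ y ∂ν, f y ≤ c) : ∫ y, k y * f y ∂ν ≤ c :=
  calc ∫ y, k y * f y ∂ν ≤ ∫ y, k y * c ∂ν := by
        refine integral_mono_of_nonneg ?_ ((integrable_of_integral_eq_one hk).mul_const c) ?_
        · filter_upwards [hf0] with y hy using mul_nonneg (hk0 y) hy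
        · filter_upwards [hfc] with y hy using mul_le_mul_of_nonneg_left hy (hk0 y)
    _ = c := by rw [integral_mul_const, hk, one_mul]

theorem integral_mul_mono_of_integral_eq_one {Y : Type*} [MeasurableSpace Y] {ν : Measure Y}
    {k f g : Y → ℝ} {c : ℝ} (hk0 : ∀ y, 0 ≤ k y) (hk : ∫ y, k y ∂ν = 1)
    (hg : AEStronglyMeasurable g ν) (hf0 : ∀ᵐ y ∂ν, 0 ≤ f y) (hfg : ∀ᵐ y ∂ν, f y ≤ g y)
    (hgc : ∀ᵐ y ∂ν, g y ≤ c) : ∫ y, k y * f y ∂ν ≤ ∫ y, k y * g y ∂ν := by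
  have hgi : Integrable (fun y => k y * g y) ν := by
    refine (integrable_of_integral_eq_one hk).mul_bdd (c := c) hg ?_
    filter_upwards [hf0, hfg, hgc] with y h0 h1 h2
    rw [Real.norm_eq_abs, abs_of_nonneg (h0.trans h1)]
    exact h2
  refine integral_mono_of_nonneg ?_ hgi ?_
  · filter_upwards [hf0] with y hy using mul_nonneg (hk0 y) hy
  · filter_upwards [hfg] with y hy using mul_le_mul_of_nonneg_left hy (hk0 y)

theorem ae_le_toReal_eLpNorm_top {α : Type*} [MeasurableSpace α] {μ : Measure α} {f : α → ℝ}
    (hf : MemLp f ⊤ μ) : ∀ᵐ x ∂μ, f x ≤ (eLpNorm f ⊤ μ).toReal := by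
  rw [toReal_eLpNorm hf.1]
  filter_upwards [ae_le_lpNorm_exponent_top hf] with x hx using (le_abs_self _).trans hx

theorem exists_forall_ge_ae_abs_sub_le {α : Type*} [MeasurableSpace α] {μ : Measure α}
    {f : ℕ → α → ℝ} {g : α → ℝ} {C k : ℝ} (hk0 : 0 ≤ k) (hk1 : k < 1)
    (hfg : ∀ m, ∀ᵐ x ∂μ, 0 ≤ f (m + 1) x - g x ∧ f (m + 1) x - g x ≤ C * k ^ m) :
    ∀ ε > (0:ℝ), ∃ N : ℕ, ∀ m ≥ N, ∀ᵐ x ∂μ, |f m x - g x| ≤ ε := by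
  intro ε hε
  have hlim : Tendsto (fun n : ℕ => C * k ^ n) atTop (𝓝 0) := by
    simpa using (tendsto_pow_atTop_nhds_zero_of_lt_one hk0 hk1).const_mul C
  obtain ⟨N, hN⟩ := eventually_atTop.1 (hlim.eventually (ge_mem_nhds hε))
  refine ⟨N + 1, fun m hm => ?_⟩
  obtain ⟨n, rfl⟩ : ∃ n, m = n + 1 := ⟨m - 1, by omega⟩
  filter_upwards [hfg n] with x hx
  rw [abs_of_nonneg hx.1]
  exact hx.2.trans (hN n (by omega))

theorem ae_succ_sub_le_mul_pow {α : Type*} [MeasurableSpace α] {μ : Measure α}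
    {f : ℕ → α → ℝ} {g : α → ℝ} {ξ β₀ : ℝ} (hξ : 0 ≤ ξ) (hβ₀ : 0 < β₀)
    (hf : ∀ m, ∀ᵐ x ∂μ, f m x ≤ ξ)
    (hgf : ∀ m x, g x ≤ f m x)
    (hfg : ∀ m, ∀ᵐ x ∂μ, f m x - g x ≤ (ξ / (ξ + β₀)) ^ m * (f m x + β₀)) (m : ℕ) :
    ∀ᵐ x ∂μ, 0 ≤ f (m + 1) x - g x ∧ f (m + 1) x - g x ≤ ξ * (ξ / (ξ + β₀)) ^ m := by
  filter_upwards [hfg (m + 1), hf (m + 1)] with x hx hfx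
  refine ⟨sub_nonneg.2 (hgf _ x), hx.trans ?_⟩
  calc (ξ / (ξ + β₀)) ^ (m + 1) * (f (m + 1) x + β₀) ≤ (ξ / (ξ + β₀)) ^ (m + 1) * (ξ + β₀) := by
        gcongr
    _ = ξ * (ξ / (ξ + β₀)) ^ m := by rw [pow_succ]; field_simp

section Volterra

variable {X : Type*} [MeasurableSpace X]

noncomputable def volterraOp (μ : Measure X) (K : X → X → ℝ → ℝ) (h W : X → ℝ → ℝ)
    (x : X) (t : ℝ) : ℝ :=
  ∫ s in Ioc 0 t, ∫ y, K x y (t - s) * (h y s * W y s) ∂μ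

noncomputable def picardStep (μ : Measure X) (K : X → X → ℝ → ℝ) (h : X → ℝ → ℝ) (G : ℝ → ℝ)
    (g u : X → ℝ → ℝ) (x : X) (t : ℝ) : ℝ :=
  g x t + volterraOp μ K h (fun y s => G (u y s)) x t

theorem volterraOp_const_mul (μ : Measure X) (K : X → X → ℝ → ℝ) (h W : X → ℝ → ℝ)
    (c : ℝ) (x : X) (t : ℝ) :
    volterraOp μ K h (fun y s => c * W y s) x t = c * volterraOp μ K h W x t := by
  simp only [volterraOp, ← integral_const_mul, mul_left_comm c]

theorem measurable_volterraIntegrand {μ : Measure X} [SFinite μ] {K : X → X → ℝ → ℝ}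
    {h W : X → ℝ → ℝ} (hK : Measurable fun q : X × X × ℝ => K q.1 q.2.1 q.2.2)
    (hh : Measurable fun q : X × ℝ => h q.1 q.2) (hW : Measurable fun q : X × ℝ => W q.1 q.2) :
    Measurable fun z : (X × ℝ) × ℝ => ∫ y, K z.1.1 y (z.1.2 - z.2) * (h y z.2 * W y z.2) ∂μ := by
  have : Measurable fun w : ((X × ℝ) × ℝ) × X =>
      K w.1.1.1 w.2 (w.1.1.2 - w.1.2) * (h w.2 w.1.2 * W w.2 w.1.2) := by fun_prop
  exact this.stronglyMeasurable.integral_prod_right'.measurable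

theorem measurable_volterraOp {μ : Measure X} [SFinite μ] {K : X → X → ℝ → ℝ}
    {h W : X → ℝ → ℝ} (hK : Measurable fun q : X × X × ℝ => K q.1 q.2.1 q.2.2)
    (hh : Measurable fun q : X × ℝ => h q.1 q.2) (hW : Measurable fun q : X × ℝ => W q.1 q.2) :
    Measurable fun q : X × ℝ => volterraOp μ K h W q.1 q.2 := by
  have hset : MeasurableSet {z : (X × ℝ) × ℝ | z.2 ∈ Ioc 0 z.1.2} :=
    (measurableSet_lt measurable_const measurable_snd).inter
      (measurableSet_le measurable_snd (by fun_prop))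
  have hind := (measurable_volterraIntegrand (μ := μ) hK hh hW).indicator hset
  convert (hind.stronglyMeasurable.integral_prod_right' (ν := volume)).measurable using 2 with q
  rw [volterraOp, ← integral_indicator measurableSet_Ioc]
  rfl

structure IsStochasticVolterra (μ : Measure X) (K : X → X → ℝ → ℝ) (h : X → ℝ → ℝ)
    (p : ℝ → ℝ) : Prop where
  measurable_kernel : Measurable fun q : X × X × ℝ => K q.1 q.2.1 q.2.2
  kernel_nonneg : ∀ x y t, 0 ≤ K x y t
  integral_kernel : ∀ᵐ x ∂μ, ∀ᵐ t ∂ν₊, ∫ y, K x y t ∂μ = 1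
  measurable_weight : Measurable fun q : X × ℝ => h q.1 q.2
  weight_nonneg : ∀ x t, 0 ≤ h x t
  weight_le : ∀ᵐ q ∂μ.prod ν₊, h q.1 q.2 ≤ p q.2
  density_nonneg : ∀ t ∈ Ioi (0:ℝ), 0 ≤ p t
  integral_density : ∫ t in Ioi (0:ℝ), p t = 1

namespace IsStochasticVolterra

variable {μ : Measure X} {K : X → X → ℝ → ℝ} {h : X → ℝ → ℝ} {p : ℝ → ℝ} {G : ℝ → ℝ}
  {g : X → ℝ → ℝ} {V : ℕ → X → ℝ → ℝ}

theorem integral_kernel_mul_nonneg (hT : IsStochasticVolterra μ K h p) {W : X → ℝ → ℝ}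
    (hW : ∀ y s, 0 ≤ W y s) (x : X) (t s : ℝ) :
    0 ≤ ∫ y, K x y (t - s) * (h y s * W y s) ∂μ :=
  integral_nonneg fun _ =>
    mul_nonneg (hT.kernel_nonneg _ _ _) (mul_nonneg (hT.weight_nonneg _ _) (hW _ _))

theorem volterraOp_nonneg (hT : IsStochasticVolterra μ K h p) {W : X → ℝ → ℝ}
    (hW : ∀ y s, 0 ≤ W y s) (x : X) (t : ℝ) : 0 ≤ volterraOp μ K h W x t :=
  integral_nonneg fun s => hT.integral_kernel_mul_nonneg hW x t s

theorem picardStep_nonneg (hT : IsStochasticVolterra μ K h p)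
    (hG0 : ∀ u, 0 ≤ u → 0 ≤ G u) (hg0 : ∀ x t, 0 ≤ g x t) {u : X → ℝ → ℝ}
    (hu0 : ∀ x t, 0 ≤ u x t) (x : X) (t : ℝ) : 0 ≤ picardStep μ K h G g u x t :=
  add_nonneg (hg0 x t) (hT.volterraOp_nonneg (fun y s => hG0 _ (hu0 y s)) x t)

theorem iterate_nonneg (hT : IsStochasticVolterra μ K h p) (hG0 : ∀ u, 0 ≤ u → 0 ≤ G u)
    (hg0 : ∀ x t, 0 ≤ g x t) (hV : ∀ m, V (m + 1) = picardStep μ K h G g (V m))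
    (hV0 : ∀ x t, 0 ≤ V 0 x t) : ∀ m x t, 0 ≤ V m x t
  | 0 => hV0
  | m + 1 => hV m ▸ hT.picardStep_nonneg hG0 hg0 (iterate_nonneg hT hG0 hg0 hV hV0 m)

theorem integrableOn_density (hT : IsStochasticVolterra μ K h p) :
    IntegrableOn p (Ioi (0:ℝ)) :=
  integrable_of_integral_eq_one hT.integral_density

theorem measurable_picardStep [SFinite μ] (hT : IsStochasticVolterra μ K h p)
    (hGc : ContinuousOn G (Ici 0)) (hg : Measurable fun q : X × ℝ => g q.1 q.2)
    {u : X → ℝ → ℝ} (hu : Measurable fun q : X × ℝ => u q.1 q.2) (hu0 : ∀ x t, 0 ≤ u x t) :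
    Measurable fun q : X × ℝ => picardStep μ K h G g u q.1 q.2 :=
  hg.add (measurable_volterraOp hT.measurable_kernel hT.measurable_weight
    (hGc.measurable_comp hu fun q => hu0 q.1 q.2))

theorem measurable_iterate [SFinite μ] (hT : IsStochasticVolterra μ K h p)
    (hGc : ContinuousOn G (Ici 0)) (hg : Measurable fun q : X × ℝ => g q.1 q.2)
    (hV : ∀ m, V (m + 1) = picardStep μ K h G g (V m)) (hV_nonneg : ∀ m x t, 0 ≤ V m x t)
    (hV0 : Measurable fun q : X × ℝ => V 0 q.1 q.2) :
    ∀ m, Measurable fun q : X × ℝ => V m q.1 q.2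
  | 0 => hV0
  | m + 1 => hV m ▸ hT.measurable_picardStep hGc hg
      (measurable_iterate hT hGc hg hV hV_nonneg hV0 m) (hV_nonneg m)

variable [SFinite μ]

theorem ae_ae_weight_mul_le (hT : IsStochasticVolterra μ K h p) {W : X → ℝ → ℝ} {c : ℝ}
    (hc : 0 ≤ c) (hW : ∀ᵐ q ∂μ.prod ν₊, W q.1 q.2 ≤ c) :
    ∀ᵐ s ∂ν₊, ∀ᵐ y ∂μ, h y s * W y s ≤ c * p s := by
  refine ae_ae_swap_of_ae_prod (p := fun q => h q.1 q.2 * W q.1 q.2 ≤ c * p q.2) ?_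
  filter_upwards [hW, hT.weight_le] with q hWq hhq
  calc h q.1 q.2 * W q.1 q.2 ≤ h q.1 q.2 * c :=
        mul_le_mul_of_nonneg_left hWq (hT.weight_nonneg _ _)
    _ ≤ c * p q.2 := by rw [mul_comm]; exact mul_le_mul_of_nonneg_left hhq hc

theorem ae_integral_kernel_mul_le (hT : IsStochasticVolterra μ K h p) {W : X → ℝ → ℝ}
    {c : ℝ} (hc : 0 ≤ c) (hW0 : ∀ y s, 0 ≤ W y s)
    (hWc : ∀ᵐ q ∂μ.prod ν₊, W q.1 q.2 ≤ c) {x : X}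
    (hx : ∀ᵐ r ∂ν₊, ∫ y, K x y r ∂μ = 1) (t : ℝ) :
    ∀ᵐ s ∂volume.restrict (Ioc 0 t), ∫ y, K x y (t - s) * (h y s * W y s) ∂μ ≤ c * p s := by
  filter_upwards [ae_restrict_Ioc_sub hx t,
    ae_restrict_of_ae_restrict_of_subset Ioc_subset_Ioi_self (hT.ae_ae_weight_mul_le hc hWc)]
    with s hs hWs
  exact integral_mul_le_of_integral_eq_one (fun y => hT.kernel_nonneg x y _) hs
    (.of_forall fun y => mul_nonneg (hT.weight_nonneg y s) (hW0 y s)) hWs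

theorem integrableOn_integral_kernel_mul (hT : IsStochasticVolterra μ K h p)
    {W : X → ℝ → ℝ} {c : ℝ} (hc : 0 ≤ c) (hW : Measurable fun q : X × ℝ => W q.1 q.2)
    (hW0 : ∀ y s, 0 ≤ W y s)
    (hWc : ∀ᵐ q ∂μ.prod ν₊, W q.1 q.2 ≤ c) {x : X}
    (hx : ∀ᵐ r ∂ν₊, ∫ y, K x y r ∂μ = 1) (t : ℝ) :
    IntegrableOn (fun s => ∫ y, K x y (t - s) * (h y s * W y s) ∂μ) (Ioc 0 t) := by
  refine Integrable.mono' ((hT.integrableOn_density.mono_set Ioc_subset_Ioi_self).const_mul c)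
    ?_ ?_
  · exact ((measurable_volterraIntegrand hT.measurable_kernel hT.measurable_weight hW).comp
      (f := fun s => ((x, t), s)) (by fun_prop)).aestronglyMeasurable
  · filter_upwards [hT.ae_integral_kernel_mul_le hc hW0 hWc hx t] with s hs
    rwa [Real.norm_eq_abs, abs_of_nonneg (hT.integral_kernel_mul_nonneg hW0 x t s)]

theorem ae_volterraOp_le (hT : IsStochasticVolterra μ K h p) {W : X → ℝ → ℝ}
    {c : ℝ} (hc : 0 ≤ c) (hW0 : ∀ y s, 0 ≤ W y s)
    (hWc : ∀ᵐ q ∂μ.prod ν₊, W q.1 q.2 ≤ c) :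
    ∀ᵐ q ∂μ.prod ν₊, volterraOp μ K h W q.1 q.2 ≤ c := by
  refine ae_prod_of_ae_forall ?_
  filter_upwards [hT.integral_kernel] with x hx t
  have hp := hT.integrableOn_density
  calc volterraOp μ K h W x t ≤ ∫ s in Ioc 0 t, c * p s :=
        integral_mono_of_nonneg (.of_forall (hT.integral_kernel_mul_nonneg hW0 x t))
          ((hp.mono_set Ioc_subset_Ioi_self).const_mul c)
          (hT.ae_integral_kernel_mul_le hc hW0 hWc hx t)
    _ = c * ∫ s in Ioc 0 t, p s := integral_const_mul c _
    _ ≤ c * ∫ s in Ioi 0, p s := by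
        refine mul_le_mul_of_nonneg_left (setIntegral_mono_set hp ?_
          Ioc_subset_Ioi_self.eventuallyLE) hc
        filter_upwards [ae_restrict_mem measurableSet_Ioi] with s hs using hT.density_nonneg s hs
    _ = c := by rw [hT.integral_density, mul_one]

theorem ae_volterraOp_mono (hT : IsStochasticVolterra μ K h p)
    {F G : X → ℝ → ℝ} {c : ℝ} (hc : 0 ≤ c) (hG : Measurable fun q : X × ℝ => G q.1 q.2)
    (hF0 : ∀ y s, 0 ≤ F y s) (hG0 : ∀ y s, 0 ≤ G y s)
    (hFG : ∀ᵐ q ∂μ.prod ν₊, F q.1 q.2 ≤ G q.1 q.2)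
    (hGc : ∀ᵐ q ∂μ.prod ν₊, G q.1 q.2 ≤ c) :
    ∀ᵐ q ∂μ.prod ν₊,
      volterraOp μ K h F q.1 q.2 ≤ volterraOp μ K h G q.1 q.2 := by
  refine ae_prod_of_ae_forall ?_
  filter_upwards [hT.integral_kernel] with x hx t
  refine integral_mono_of_nonneg (.of_forall (hT.integral_kernel_mul_nonneg hF0 x t))
    (hT.integrableOn_integral_kernel_mul hc hG hG0 hGc hx t) ?_
  have hK := hT.measurable_kernel
  have hh := hT.measurable_weight
  filter_upwards [ae_restrict_Ioc_sub hx t,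
    ae_restrict_of_ae_restrict_of_subset Ioc_subset_Ioi_self (ae_ae_swap_of_ae_prod hFG),
    ae_restrict_of_ae_restrict_of_subset Ioc_subset_Ioi_self (hT.ae_ae_weight_mul_le hc hGc)]
    with s hs hFGs hGs
  refine integral_mul_mono_of_integral_eq_one (fun y => hT.kernel_nonneg x y _) hs
    (by fun_prop : Measurable fun y => h y s * G y s).aestronglyMeasurable
    (.of_forall fun y => mul_nonneg (hT.weight_nonneg y s) (hF0 y s)) ?_ hGs
  filter_upwards [hFGs] with y hy using mul_le_mul_of_nonneg_left hy (hT.weight_nonneg y s)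

theorem ae_tendsto_volterraOp (hT : IsStochasticVolterra μ K h p)
    {F : ℕ → X → ℝ → ℝ} {W : X → ℝ → ℝ} {c : ℝ} (hc : 0 ≤ c)
    (hF : ∀ n, Measurable fun q : X × ℝ => F n q.1 q.2) (hF0 : ∀ n y s, 0 ≤ F n y s)
    (hFc : ∀ n, ∀ᵐ q ∂μ.prod ν₊, F n q.1 q.2 ≤ c)
    (hlim : ∀ᵐ q ∂μ.prod ν₊,
      Tendsto (fun n => F n q.1 q.2) atTop (𝓝 (W q.1 q.2))) :
    ∀ᵐ q ∂μ.prod ν₊,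
      Tendsto (fun n => volterraOp μ K h (F n) q.1 q.2) atTop (𝓝 (volterraOp μ K h W q.1 q.2)) := by
  refine ae_prod_of_ae_forall ?_
  filter_upwards [hT.integral_kernel] with x hx t
  refine tendsto_integral_of_dominated_convergence (fun s => c * p s)
    (fun n => (hT.integrableOn_integral_kernel_mul hc (hF n) (hF0 n) (hFc n) hx t).1)
    ((hT.integrableOn_density.mono_set Ioc_subset_Ioi_self).const_mul c) (fun n => ?_) ?_
  · filter_upwards [hT.ae_integral_kernel_mul_le hc (hF0 n) (hFc n) hx t] with s hs
    rwa [Real.norm_eq_abs, abs_of_nonneg (hT.integral_kernel_mul_nonneg (hF0 n) x t s)]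
  have hK := hT.measurable_kernel
  have hh := hT.measurable_weight
  filter_upwards [ae_restrict_Ioc_sub hx t,
    ae_restrict_of_ae_restrict_of_subset Ioc_subset_Ioi_self (ae_ae_swap_of_ae_prod hlim),
    ae_restrict_of_ae_restrict_of_subset Ioc_subset_Ioi_self
      (ae_all_iff.2 fun n => hT.ae_ae_weight_mul_le hc (hFc n))]
    with s hs hlims hFs
  refine tendsto_integral_of_dominated_convergence (fun y => K x y (t - s) * (c * p s))
    (fun n => (by fun_prop : Measurable fun y =>
      K x y (t - s) * (h y s * F n y s)).aestronglyMeasurable)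
    ((integrable_of_integral_eq_one hs).mul_const _) (fun n => ?_) ?_
  · filter_upwards [hFs n] with y hy
    rw [Real.norm_eq_abs, abs_of_nonneg (mul_nonneg (hT.kernel_nonneg x y _)
      (mul_nonneg (hT.weight_nonneg y s) (hF0 n y s)))]
    exact mul_le_mul_of_nonneg_left hy (hT.kernel_nonneg x y _)
  · filter_upwards [hlims] with y hy using (hy.const_mul (h y s)).const_mul (K x y (t - s))

theorem ae_picardStep_le_add (hT : IsStochasticVolterra μ K h p)
    (hG0 : ∀ u, 0 ≤ u → 0 ≤ G u) (hGm : MonotoneOn G (Ici 0)) {u : X → ℝ → ℝ}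
    (hu0 : ∀ x t, 0 ≤ u x t) {ξ : ℝ} (hξ : 0 ≤ ξ)
    (huξ : ∀ᵐ q ∂μ.prod ν₊, u q.1 q.2 ≤ ξ) :
    ∀ᵐ q ∂μ.prod ν₊,
      picardStep μ K h G g u q.1 q.2 ≤ g q.1 q.2 + G ξ := by
  have hGu : ∀ᵐ q ∂μ.prod ν₊, G (u q.1 q.2) ≤ G ξ :=
    huξ.mono fun q hq => hGm (hu0 _ _) hξ hq
  filter_upwards [hT.ae_volterraOp_le (hG0 ξ hξ) (fun y s => hG0 _ (hu0 y s)) hGu]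
    with q hq using add_le_add_right hq _

theorem ae_picardStep_mono (hT : IsStochasticVolterra μ K h p)
    (hG0 : ∀ u, 0 ≤ u → 0 ≤ G u) (hGm : MonotoneOn G (Ici 0)) (hGc : ContinuousOn G (Ici 0))
    {u w : X → ℝ → ℝ} (hw : Measurable fun q : X × ℝ => w q.1 q.2) (hu0 : ∀ x t, 0 ≤ u x t)
    (hw0 : ∀ x t, 0 ≤ w x t) {ξ : ℝ} (hξ : 0 ≤ ξ)
    (huw : ∀ᵐ q ∂μ.prod ν₊, u q.1 q.2 ≤ w q.1 q.2)
    (hwξ : ∀ᵐ q ∂μ.prod ν₊, w q.1 q.2 ≤ ξ) :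
    ∀ᵐ q ∂μ.prod ν₊,
      picardStep μ K h G g u q.1 q.2 ≤ picardStep μ K h G g w q.1 q.2 := by
  filter_upwards [hT.ae_volterraOp_mono (hG0 ξ hξ) (hGc.measurable_comp hw fun q => hw0 q.1 q.2)
    (fun y s => hG0 _ (hu0 y s)) (fun y s => hG0 _ (hw0 y s))
    (huw.mono fun q hq => hGm (hu0 _ _) (hw0 _ _) hq)
    (hwξ.mono fun q hq => hGm (hw0 _ _) hξ hq)] with q hq using add_le_add_right hq _

theorem ae_tendsto_picardStep (hT : IsStochasticVolterra μ K h p)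
    (hG0 : ∀ u, 0 ≤ u → 0 ≤ G u) (hGm : MonotoneOn G (Ici 0)) (hGc : ContinuousOn G (Ici 0))
    {u : ℕ → X → ℝ → ℝ} {w : X → ℝ → ℝ} (hu : ∀ n, Measurable fun q : X × ℝ => u n q.1 q.2)
    (hu0 : ∀ n x t, 0 ≤ u n x t) (hw0 : ∀ x t, 0 ≤ w x t) {ξ : ℝ} (hξ : 0 ≤ ξ)
    (huξ : ∀ n, ∀ᵐ q ∂μ.prod ν₊, u n q.1 q.2 ≤ ξ)
    (hlim : ∀ᵐ q ∂μ.prod ν₊,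
      Tendsto (fun n => u n q.1 q.2) atTop (𝓝 (w q.1 q.2))) :
    ∀ᵐ q ∂μ.prod ν₊, Tendsto
      (fun n => picardStep μ K h G g (u n) q.1 q.2) atTop (𝓝 (picardStep μ K h G g w q.1 q.2)) := by
  have hGlim : ∀ᵐ q ∂μ.prod ν₊,
      Tendsto (fun n => G (u n q.1 q.2)) atTop (𝓝 (G (w q.1 q.2))) := by
    filter_upwards [hlim] with q hq
    exact (hGc _ (hw0 q.1 q.2)).tendsto.comp
      (tendsto_nhdsWithin_iff.2 ⟨hq, .of_forall fun n => hu0 n q.1 q.2⟩)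
  filter_upwards [hT.ae_tendsto_volterraOp (W := fun y s => G (w y s)) (hG0 ξ hξ)
    (fun n => hGc.measurable_comp (hu n) fun q => hu0 n q.1 q.2)
    (fun n y s => hG0 _ (hu0 n y s))
    (fun n => (huξ n).mono fun q hq => hGm (hu0 _ _ _) hξ hq) hGlim] with q hq
    using hq.const_add _

theorem ae_picardStep_sub_le (hT : IsStochasticVolterra μ K h p)
    (hG0 : ∀ u, 0 ≤ u → 0 ≤ G u) (hGm : MonotoneOn G (Ici 0)) (hGc : ContinuousOn G (Ici 0))
    {u w : X → ℝ → ℝ} (hu : Measurable fun q : X × ℝ => u q.1 q.2) (hu0 : ∀ x t, 0 ≤ u x t)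
    (hw0 : ∀ x t, 0 ≤ w x t) {ξ : ℝ} (hξ : 0 ≤ ξ)
    (huξ : ∀ᵐ q ∂μ.prod ν₊, u q.1 q.2 ≤ ξ) {c : ℝ} (hc : c ≤ 1)
    (hGuw : ∀ᵐ q ∂μ.prod ν₊,
      (1 - c) * G (w q.1 q.2) ≤ G (u q.1 q.2)) :
    ∀ᵐ q ∂μ.prod ν₊,
      picardStep μ K h G g w q.1 q.2 - picardStep μ K h G g u q.1 q.2 ≤
        c * (picardStep μ K h G g w q.1 q.2 - g q.1 q.2) := by
  filter_upwards [hT.ae_volterraOp_mono (hG0 ξ hξ) (hGc.measurable_comp hu fun q => hu0 q.1 q.2)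
    (fun y s => mul_nonneg (sub_nonneg.2 hc) (hG0 _ (hw0 y s))) (fun y s => hG0 _ (hu0 y s))
    hGuw (huξ.mono fun q hq => hGm (hu0 _ _) hξ hq)] with q hq
  rw [volterraOp_const_mul] at hq
  simp only [picardStep]
  linarith

theorem ae_iterate_le_and_succ_le (hT : IsStochasticVolterra μ K h p)
    (hG0 : ∀ u, 0 ≤ u → 0 ≤ G u) (hGm : MonotoneOn G (Ici 0)) (hGc : ContinuousOn G (Ici 0))
    (hV : ∀ m, V (m + 1) = picardStep μ K h G g (V m))
    (hV_meas : ∀ m, Measurable fun q : X × ℝ => V m q.1 q.2) (hV_nonneg : ∀ m x t, 0 ≤ V m x t)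
    {ξ : ℝ} (hξ : 0 ≤ ξ) (hV0 : ∀ x t, V 0 x t = g x t + G ξ)
    (hgξ : ∀ᵐ q ∂μ.prod ν₊, g q.1 q.2 + G ξ ≤ ξ) :
    ∀ m, ∀ᵐ q ∂μ.prod ν₊,
      V m q.1 q.2 ≤ ξ ∧ V (m + 1) q.1 q.2 ≤ V m q.1 q.2
  | 0 => by
    have hV0ξ : ∀ᵐ q ∂μ.prod ν₊, V 0 q.1 q.2 ≤ ξ := by
      filter_upwards [hgξ] with q hq using (hV0 q.1 q.2).trans_le hq
    filter_upwards [hV0ξ, hT.ae_picardStep_le_add (g := g) hG0 hGm (hV_nonneg 0) hξ hV0ξ]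
      with q hq hq1
    refine ⟨hq, ?_⟩
    rw [hV, hV0]
    exact hq1
  | m + 1 => by
    have ih := ae_iterate_le_and_succ_le hT hG0 hGm hGc hV hV_meas hV_nonneg hξ hV0 hgξ m
    have hmono := hT.ae_picardStep_mono (g := g) hG0 hGm hGc (hV_meas m) (hV_nonneg (m + 1))
      (hV_nonneg m) hξ (ih.mono fun q hq => hq.2) (ih.mono fun q hq => hq.1)
    filter_upwards [ih, hmono] with q hq hq'
    exact ⟨hq.2.trans hq.1, by simpa only [hV] using hq'⟩

theorem ae_eq_picardStep_of_tendsto (hT : IsStochasticVolterra μ K h p)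
    (hG0 : ∀ u, 0 ≤ u → 0 ≤ G u) (hGm : MonotoneOn G (Ici 0)) (hGc : ContinuousOn G (Ici 0))
    (hV : ∀ m, V (m + 1) = picardStep μ K h G g (V m))
    (hV_meas : ∀ m, Measurable fun q : X × ℝ => V m q.1 q.2) (hV_nonneg : ∀ m x t, 0 ≤ V m x t)
    {ξ : ℝ} (hξ : 0 ≤ ξ) (hVξ : ∀ m, ∀ᵐ q ∂μ.prod ν₊, V m q.1 q.2 ≤ ξ)
    {v : X → ℝ → ℝ} (hv0 : ∀ x t, 0 ≤ v x t)
    (hlim : ∀ᵐ q ∂μ.prod ν₊,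
      Tendsto (fun m => V m q.1 q.2) atTop (𝓝 (v q.1 q.2))) :
    ∀ᵐ q ∂μ.prod ν₊, v q.1 q.2 = picardStep μ K h G g v q.1 q.2 := by
  filter_upwards [hlim, hT.ae_tendsto_picardStep (g := g) hG0 hGm hGc hV_meas hV_nonneg hv0 hξ
    hVξ hlim] with q hq hΦ
  refine tendsto_nhds_unique (hq.comp (tendsto_add_atTop_nat 1)) ?_
  simpa only [Function.comp_def, hV] using hΦ

theorem ae_iterate_sub_le_pow (hT : IsStochasticVolterra μ K h p)
    (hG0 : ∀ u, 0 ≤ u → 0 ≤ G u) (hGm : MonotoneOn G (Ici 0)) (hGc : ContinuousOn G (Ici 0))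
    {β₀ : ℝ} (hβ₀ : 0 < β₀) (hG_conc : ConcaveOn ℝ (Ici (-β₀)) G) (hG_zero : G (-β₀) = 0)
    (hg0 : ∀ x t, 0 ≤ g x t) (hV : ∀ m, V (m + 1) = picardStep μ K h G g (V m))
    (hV_nonneg : ∀ m x t, 0 ≤ V m x t) {ξ : ℝ} (hξ : 0 ≤ ξ)
    (hVξ : ∀ m, ∀ᵐ q ∂μ.prod ν₊, V m q.1 q.2 ≤ ξ)
    {v : X → ℝ → ℝ} (hv_meas : Measurable fun q : X × ℝ => v q.1 q.2) (hv0 : ∀ x t, 0 ≤ v x t)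
    (hvV : ∀ m x t, v x t ≤ V m x t)
    (hv : ∀ᵐ q ∂μ.prod ν₊, v q.1 q.2 = picardStep μ K h G g v q.1 q.2) :
    ∀ m, ∀ᵐ q ∂μ.prod ν₊,
      V m q.1 q.2 - v q.1 q.2 ≤ (ξ / (ξ + β₀)) ^ m * (V m q.1 q.2 + β₀)
  | 0 => .of_forall fun q => by rw [pow_zero, one_mul]; linarith [hv0 q.1 q.2]
  | m + 1 => by
    set k := ξ / (ξ + β₀) with hk
    have hk0 : 0 ≤ k := by positivity
    have hk1 : k ≤ 1 := div_le_one_of_le₀ (by linarith) (by linarith)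
    have hG_sub : ∀ᵐ q ∂μ.prod ν₊,
        (1 - k ^ m) * G (V m q.1 q.2) ≤ G (v q.1 q.2) := by
      filter_upwards [ae_iterate_sub_le_pow hT hG0 hGm hGc hβ₀ hG_conc hG_zero hg0 hV hV_nonneg
        hξ hVξ hv_meas hv0 hvV hv m] with q hq
      exact hG_conc.one_sub_mul_le_of_sub_le hG_zero (by linarith [hv0 q.1 q.2])
        (hvV m q.1 q.2) (by linarith [hV_nonneg m q.1 q.2]) (hG0 _ (hV_nonneg m q.1 q.2))
        (by rwa [sub_neg_eq_add])
    have hvξ := (hVξ 0).mono fun q hq => (hvV 0 q.1 q.2).trans hq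
    filter_upwards [hT.ae_picardStep_sub_le (g := g) hG0 hGm hGc hv_meas hv0 (hV_nonneg m) hξ hvξ
      (pow_le_one₀ hk0 hk1) hG_sub, hv, hVξ (m + 1)] with q hstep hvq hVq
    -- `k` is chosen so that `u ≤ ξ` is equivalent to `u ≤ k (u + β₀)`
    have hVk : V (m + 1) q.1 q.2 ≤ k * (V (m + 1) q.1 q.2 + β₀) := by
      rw [hk, div_mul_eq_mul_div, le_div_iff₀ (by linarith)]
      nlinarith
    rw [← hV, ← hvq] at hstep
    calc V (m + 1) q.1 q.2 - v q.1 q.2 ≤ k ^ m * (V (m + 1) q.1 q.2 - g q.1 q.2) := hstep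
      _ ≤ k ^ m * (k * (V (m + 1) q.1 q.2 + β₀)) := by
        gcongr
        linarith [hg0 q.1 q.2]
      _ = k ^ (m + 1) * (V (m + 1) q.1 q.2 + β₀) := by ring

end IsStochasticVolterra

end Volterra

theorem existence_relaxed_stochastic_general
    {X : Type*} [MeasurableSpace X] (μ : Measure X) [SigmaFinite μ]
    (K : X → X → ℝ → ℝ) (gt h : X → ℝ → ℝ) (Gt : ℝ → ℝ)
    (p₁ p₂ : ℝ → ℝ) (β₀ βt ξt : ℝ)
    (hK_meas : Measurable fun q : X × X × ℝ => K q.1 q.2.1 q.2.2)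
    (hK_nonneg : ∀ x y t, 0 ≤ K x y t)
    (hK_stoch : ∀ᵐ x ∂μ, ∀ᵐ t ∂(volume.restrict (Ioi (0:ℝ))),
      (∫ y, K x y t ∂μ) = 1)
    (hg_meas : Measurable fun q : X × ℝ => gt q.1 q.2)
    (hg_nonneg : ∀ x t, 0 ≤ gt x t)
    (hg_bdd : MemLp (fun q : X × ℝ => gt q.1 q.2) ⊤
      (μ.prod (volume.restrict (Ioi (0:ℝ)))))
    (hβt : βt = (eLpNorm (fun q : X × ℝ => gt q.1 q.2) ⊤
      (μ.prod (volume.restrict (Ioi (0:ℝ))))).toReal)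
    (hh_meas : Measurable fun q : X × ℝ => h q.1 q.2)
    (hh_nonneg : ∀ x t, 0 ≤ h x t)
    (hβ₀_pos : 0 < β₀)
    (hG_cont : ContinuousOn Gt (Ici (-β₀)))
    (hG_zero : Gt (-β₀) = 0)
    (hG_nonneg : ∀ u, -β₀ ≤ u → 0 ≤ Gt u)
    (hG_mono : StrictMonoOn Gt (Ici (-β₀)))
    (hG_conc : ConcaveOn ℝ (Ici (-β₀)) Gt)
    (hp₂_pos : ∀ t ∈ Ioi (0:ℝ), 0 < p₂ t)
    (hp₂_int : (∫ t in Ioi (0:ℝ), p₂ t) = 1)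
    (hp_bound : ∀ᵐ x ∂μ, ∀ᵐ t ∂(volume.restrict (Ioi (0:ℝ))),
      p₁ t ≤ h x t ∧ h x t ≤ p₂ t)
    (hξt : -β₀ < ξt) (hξt_eq : ξt - Gt ξt = βt)
    (V : ℕ → X → ℝ → ℝ)
    (hV0 : ∀ x t, V 0 x t = ξt - βt + gt x t)
    (hVsucc : ∀ m x t, V (m + 1) x t =
      gt x t + ∫ s in Ioc (0:ℝ) t, ∫ y, K x y (t - s) * (h y s * Gt (V m y s)) ∂μ) :
    ∃ v : X → ℝ → ℝ,
      MemLp (fun q : X × ℝ => v q.1 q.2) ⊤ (μ.prod (volume.restrict (Ioi (0:ℝ)))) ∧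
      (∀ᵐ q ∂(μ.prod (volume.restrict (Ioi (0:ℝ)))), 0 ≤ v q.1 q.2) ∧
      (∀ᵐ q ∂(μ.prod (volume.restrict (Ioi (0:ℝ)))),
        v q.1 q.2 = gt q.1 q.2 +
          ∫ s in Ioc (0:ℝ) q.2, ∫ y, K q.1 y (q.2 - s) * (h y s * Gt (v y s)) ∂μ) ∧
      (∀ m, Measurable fun q : X × ℝ => V m q.1 q.2) ∧
      (∀ᵐ q ∂(μ.prod (volume.restrict (Ioi (0:ℝ)))),
        ∀ m, 0 ≤ V m q.1 q.2 ∧ V (m + 1) q.1 q.2 ≤ V m q.1 q.2) ∧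
      (∀ ε > (0:ℝ), ∃ N : ℕ, ∀ m ≥ N,
        ∀ᵐ q ∂(μ.prod (volume.restrict (Ioi (0:ℝ)))),
          |V m q.1 q.2 - v q.1 q.2| ≤ ε) ∧
      (∃ C > (0:ℝ), ∃ k ∈ Ioo (0:ℝ) 1,
        ∀ m : ℕ, ∀ᵐ q ∂(μ.prod (volume.restrict (Ioi (0:ℝ)))),
          0 ≤ V (m + 1) q.1 q.2 - v q.1 q.2 ∧
          V (m + 1) q.1 q.2 - v q.1 q.2 ≤ C * k ^ m) := by
  have hT : IsStochasticVolterra μ K h p₂ :=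
    { measurable_kernel := hK_meas, kernel_nonneg := hK_nonneg, integral_kernel := hK_stoch,
      measurable_weight := hh_meas, weight_nonneg := hh_nonneg,
      weight_le := ae_prod_of_ae_ae₀ (nullMeasurableSet_le hh_meas.aemeasurable
          (integrable_of_integral_eq_one hp₂_int).aemeasurable.comp_snd)
        (hp_bound.mono fun x hx => hx.mono fun t ht => ht.2),
      density_nonneg := fun t ht => (hp₂_pos t ht).le, integral_density := hp₂_int }
  have hIci : Ici (0:ℝ) ⊆ Ici (-β₀) := Ici_subset_Ici.2 (by linarith)
  have hG0 : ∀ u, 0 ≤ u → 0 ≤ Gt u := fun u hu => hG_nonneg u (hIci hu)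
  have hGm : MonotoneOn Gt (Ici 0) := hG_mono.monotoneOn.mono hIci
  have hGc : ContinuousOn Gt (Ici 0) := hG_cont.mono hIci
  have hGξ : 0 < Gt ξt := hG_zero ▸ hG_mono self_mem_Ici hξt.le hξt
  have hgβ : ∀ᵐ q ∂μ.prod ν₊, gt q.1 q.2 ≤ βt := hβt ▸ ae_le_toReal_eLpNorm_top hg_bdd
  have hβt0 : 0 ≤ βt := hβt ▸ ENNReal.toReal_nonneg
  have hξ : 0 < ξt := by linarith
  have hV : ∀ m, V (m + 1) = picardStep μ K h Gt gt (V m) := fun m => funext₂ (hVsucc m)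
  have hV0' : ∀ x t, V 0 x t = gt x t + Gt ξt := fun x t => by rw [hV0]; linarith
  have hV_nonneg := hT.iterate_nonneg hG0 hg_nonneg hV fun x t => by
    rw [hV0']; exact add_nonneg (hg_nonneg x t) hGξ.le
  have hV_meas := hT.measurable_iterate hGc hg_meas hV hV_nonneg (by simp_rw [hV0']; fun_prop)
  have hV_le := hT.ae_iterate_le_and_succ_le hG0 hGm hGc hV hV_meas hV_nonneg hξ.le hV0'
    (hgβ.mono fun q hq => by linarith)
  have hVξ m := (hV_le m).mono fun q hq => hq.1
  have hV_anti := ae_all_iff.2 hV_le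
  set v : X → ℝ → ℝ := fun x t => ⨅ m, V m x t
  have hbdd : ∀ x t, BddBelow (range fun m => V m x t) :=
    fun x t => ⟨0, forall_mem_range.2 fun m => hV_nonneg m x t⟩
  have hvV : ∀ m x t, v x t ≤ V m x t := fun m x t => ciInf_le (hbdd x t) m
  have hv0 : ∀ x t, 0 ≤ v x t := fun x t => le_ciInf fun m => hV_nonneg m x t
  have hv_meas : Measurable fun q : X × ℝ => v q.1 q.2 := Measurable.iInf hV_meas
  have hlim : ∀ᵐ q ∂μ.prod ν₊, Tendsto (fun m => V m q.1 q.2) atTop (𝓝 (v q.1 q.2)) :=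
    hV_anti.mono fun q hq =>
      tendsto_atTop_ciInf (antitone_nat_of_succ_le fun m => (hq m).2) (hbdd q.1 q.2)
  have hv := hT.ae_eq_picardStep_of_tendsto hG0 hGm hGc hV hV_meas hV_nonneg hξ.le hVξ hv0 hlim
  have hdecay := hT.ae_iterate_sub_le_pow hG0 hGm hGc hβ₀_pos hG_conc hG_zero hg_nonneg hV
    hV_nonneg hξ.le hVξ hv_meas hv0 hvV hv
  have hk : ξt / (ξt + β₀) ∈ Ioo 0 1 :=
    ⟨by positivity, (div_lt_one (by linarith)).2 (by linarith)⟩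
  have herr := ae_succ_sub_le_mul_pow hξ.le hβ₀_pos hVξ (fun m q => hvV m q.1 q.2) hdecay
  refine ⟨v, memLp_top_of_bound hv_meas.aestronglyMeasurable ξt ?_,
    .of_forall fun q => hv0 q.1 q.2, hv, hV_meas,
    hV_anti.mono fun q hq m => ⟨hV_nonneg m q.1 q.2, (hq m).2⟩,
    exists_forall_ge_ae_abs_sub_le hk.1.le hk.2 herr, ξt, hξ, _, hk, herr⟩
  filter_upwards [hVξ 0] with q hq
  rw [Real.norm_eq_abs, abs_of_nonneg (hv0 _ _)]
  exact (hvV 0 _ _).trans hq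

/-- **Existence with relaxed data, stochastic case (Corollary 3.3).**
With the non-linearity `Gt` defined on `[-β₀, ∞)` vanishing at `-β₀`,
bounded non-negative `gt`, `h` sandwiched between `p₁` and `p₂`, the
concave homeomorphism `φ` with the shifted comparison inequality, and the
threshold `ξt`, there exists a non-negative `v ∈ L^∞` solving the integral
equation; `v` is the uniform limit of the nonincreasing iteration `V`,
with a geometric error bound. -/
theorem existence_relaxed_stochastic
    {X : Type*} [MeasurableSpace X] (μ : Measure X) [SigmaFinite μ]
    (K : X → X → ℝ → ℝ) (gt h : X → ℝ → ℝ) (Gt : ℝ → ℝ)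
    (p₁ p₂ : ℝ → ℝ) (β₀ βt ξt ratLim : ℝ) (φ : ℝ → ℝ)
    (hK_meas : Measurable fun q : X × X × ℝ => K q.1 q.2.1 q.2.2)
    (hK_nonneg : ∀ x y t, 0 ≤ K x y t)
    (hK_stoch : ∀ᵐ x ∂μ, ∀ᵐ t ∂(volume.restrict (Ioi (0:ℝ))),
      (∫ y, K x y t ∂μ) = 1)
    (hg_meas : Measurable fun q : X × ℝ => gt q.1 q.2)
    (hg_nonneg : ∀ x t, 0 ≤ gt x t)
    (hg_bdd : MemLp (fun q : X × ℝ => gt q.1 q.2) ⊤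
      (μ.prod (volume.restrict (Ioi (0:ℝ)))))
    (hβt : βt = (eLpNorm (fun q : X × ℝ => gt q.1 q.2) ⊤
      (μ.prod (volume.restrict (Ioi (0:ℝ))))).toReal)
    (hh_meas : Measurable fun q : X × ℝ => h q.1 q.2)
    (hh_nonneg : ∀ x t, 0 ≤ h x t)
    (hβ₀_pos : 0 < β₀)
    (hG_cont : ContinuousOn Gt (Ici (-β₀)))
    (hG_zero : Gt (-β₀) = 0)
    (hG_nonneg : ∀ u, -β₀ ≤ u → 0 ≤ Gt u)
    (hG_mono : StrictMonoOn Gt (Ici (-β₀)))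
    (hG_conc : ConcaveOn ℝ (Ici (-β₀)) Gt)
    (hp₁_cont : ContinuousOn p₁ (Ioi 0)) (hp₂_cont : ContinuousOn p₂ (Ioi 0))
    (hp₁_pos : ∀ t ∈ Ioi (0:ℝ), 0 < p₁ t) (hp₂_pos : ∀ t ∈ Ioi (0:ℝ), 0 < p₂ t)
    (hp_ne : ∃ t ∈ Ioi (0:ℝ), p₁ t ≠ p₂ t)
    (hp₂_int : (∫ t in Ioi (0:ℝ), p₂ t) = 1)
    (hp_bound : ∀ᵐ x ∂μ, ∀ᵐ t ∂(volume.restrict (Ioi (0:ℝ))),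
      p₁ t ≤ h x t ∧ h x t ≤ p₂ t)
    (hrat_pos : 0 < ratLim)
    (hrat_lim : Tendsto (fun t => p₁ t / p₂ t) (nhdsWithin 0 (Ioi 0)) (nhds ratLim))
    (hφ_cont : ContinuousOn φ (Icc 0 1))
    (hφ0 : φ 0 = 0) (hφ1 : φ 1 = 1)
    (hφ_mono : StrictMonoOn φ (Icc 0 1))
    (hφ_conc : ConcaveOn ℝ (Icc 0 1) φ)
    (hξt : -β₀ < ξt) (hξt_eq : ξt - Gt ξt = βt)
    (hφG : ∀ σ ∈ Icc (0:ℝ) 1, ∀ v ∈ Icc (-β₀) ξt,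
      φ σ * Gt v ≤ Gt (σ * v - (1 - σ) * β₀))
    (V : ℕ → X → ℝ → ℝ)
    (hV0 : ∀ x t, V 0 x t = ξt - βt + gt x t)
    (hVsucc : ∀ m x t, V (m + 1) x t =
      gt x t + ∫ s in Ioc (0:ℝ) t, ∫ y, K x y (t - s) * (h y s * Gt (V m y s)) ∂μ) :
    ∃ v : X → ℝ → ℝ,
      MemLp (fun q : X × ℝ => v q.1 q.2) ⊤ (μ.prod (volume.restrict (Ioi (0:ℝ)))) ∧
      (∀ᵐ q ∂(μ.prod (volume.restrict (Ioi (0:ℝ)))), 0 ≤ v q.1 q.2) ∧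
      (∀ᵐ q ∂(μ.prod (volume.restrict (Ioi (0:ℝ)))),
        v q.1 q.2 = gt q.1 q.2 +
          ∫ s in Ioc (0:ℝ) q.2, ∫ y, K q.1 y (q.2 - s) * (h y s * Gt (v y s)) ∂μ) ∧
      (∀ m, Measurable fun q : X × ℝ => V m q.1 q.2) ∧
      (∀ᵐ q ∂(μ.prod (volume.restrict (Ioi (0:ℝ)))),
        ∀ m, 0 ≤ V m q.1 q.2 ∧ V (m + 1) q.1 q.2 ≤ V m q.1 q.2) ∧
      (∀ ε > (0:ℝ), ∃ N : ℕ, ∀ m ≥ N,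
        ∀ᵐ q ∂(μ.prod (volume.restrict (Ioi (0:ℝ)))),
          |V m q.1 q.2 - v q.1 q.2| ≤ ε) ∧
      (∃ C > (0:ℝ), ∃ k ∈ Ioo (0:ℝ) 1,
        ∀ m : ℕ, ∀ᵐ q ∂(μ.prod (volume.restrict (Ioi (0:ℝ)))),
          0 ≤ V (m + 1) q.1 q.2 - v q.1 q.2 ∧
          V (m + 1) q.1 q.2 - v q.1 q.2 ≤ C * k ^ m) :=
  existence_relaxed_stochastic_general μ K gt h Gt p₁ p₂ β₀ βt ξt hK_meas hK_nonneg hK_stoch hg_meas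
    hg_nonneg hg_bdd hβt hh_meas hh_nonneg hβ₀_pos hG_cont hG_zero hG_nonneg hG_mono hG_conc hp₂_pos
    hp₂_int hp_bound hξt hξt_eq V hV0 hVsucc
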